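/- arXiv:2110.08980 — 4 statements merged into one kernel-verified Lean document; each statement's English description precedes it below -/
import Mathlib

section
/- Let N be a positive integer, let C be an N×N complex positive semidefinite matrix with C ≠ 0, let D be an N×N diagonal matrix with real diagonal entries, let λ > 0 be real, and let u ∈ ℂ^N have all coordinates nonzero. If D − λ·u uᴴ is positive semidefinite and D C = λ (u uᴴ) C, then D is invertible and C has rank one. -/
/-! The diagonal of the positive semidefinite matrix `D - λ u uᴴ` gives `dᵢ ≥ λ |uᵢ|² > 0`, so `D`
is invertible. Hence `rank C = rank (D C) = rank (λ u uᴴ C) ≤ rank (u uᴴ) ≤ 1`, and `C ≠ 0`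
forces equality. -/

open Matrix
open scoped ComplexOrder

theorem Matrix.rank_eq_zero_iff {m n K : Type*} [Fintype n] [Field K] {A : Matrix m n K} :
    A.rank = 0 ↔ A = 0 := by
  classical
  rw [rank, Submodule.finrank_eq_zero, LinearMap.range_eq_bot, ← toLin'_apply',
    LinearEquiv.map_eq_zero_iff]

theorem Matrix.PosSemidef.pos_of_diagonal_sub_smul_vecMulVec {n 𝕜 : Type*} [Fintype n]
    [DecidableEq n] [RCLike 𝕜] {d u : n → 𝕜} {c : 𝕜} (hc : 0 < c) (hu : ∀ i, u i ≠ 0)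
    (h : (diagonal d - c • vecMulVec u (star u)).PosSemidef) (i : n) : 0 < d i := by
  have hdiag : 0 ≤ d i - c * (u i * star (u i)) := by
    simpa [vecMulVec_apply] using h.diag_nonneg (i := i)
  have hpos : 0 < c * (u i * star (u i)) :=
    mul_pos hc (mul_star_self_pos (IsRegular.of_ne_zero (hu i)))
  exact hpos.trans_le (sub_nonneg.mp hdiag)

theorem sdr_rank_one_general (N : ℕ)
    (C : Matrix (Fin N) (Fin N) ℂ) (hC0 : C ≠ 0)
    (d : Fin N → ℝ) (l : ℝ) (hl : 0 < l)
    (u : Fin N → ℂ) (hu : ∀ i, u i ≠ 0)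
    (hM : (Matrix.diagonal (fun i => (d i : ℂ))
            - (l : ℂ) • Matrix.vecMulVec u (star u)).PosSemidef)
    (heq : Matrix.diagonal (fun i => (d i : ℂ)) * C
            = (l : ℂ) • (Matrix.vecMulVec u (star u) * C)) :
    IsUnit (Matrix.diagonal (fun i => (d i : ℂ))) ∧ C.rank = 1 := by
  have hl' : (0 : ℂ) < l := Complex.zero_lt_real.mpr hl
  have hd := hM.pos_of_diagonal_sub_smul_vecMulVec hl' hu
  have hD : IsUnit (Matrix.diagonal (fun i => (d i : ℂ))) :=
    isUnit_diagonal.mpr (Pi.isUnit_iff.mpr fun i => (hd i).ne'.isUnit)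
  refine ⟨hD, le_antisymm ?_ (Nat.one_le_iff_ne_zero.mpr (rank_eq_zero_iff.not.mpr hC0))⟩
  calc C.rank = (Matrix.diagonal (fun i => (d i : ℂ)) * C).rank :=
        (rank_mul_eq_right_of_isUnit_det _ _ ((isUnit_iff_isUnit_det _).mp hD)).symm
    _ = (vecMulVec u (star u) * C).rank := by
        rw [heq, rank_smul_of_mem_nonZeroDivisors _ (mem_nonZeroDivisors_of_ne_zero hl'.ne')]
    _ ≤ (vecMulVec u (star u)).rank := rank_mul_le_left _ _
    _ ≤ 1 := rank_vecMulVec_le _ _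

/-- rank-one KKT argument. If `C ⪰ 0`, `C ≠ 0`, `D` is diagonal with real
entries, `λ > 0`, `u` has all coordinates nonzero, `D − λ u uᴴ ⪰ 0`, and
`D C = λ (u uᴴ) C`, then `D` is invertible and `C` has rank one. -/
theorem sdr_rank_one (N : ℕ) (hN : 0 < N)
    (C : Matrix (Fin N) (Fin N) ℂ) (hC : C.PosSemidef) (hC0 : C ≠ 0)
    (d : Fin N → ℝ) (l : ℝ) (hl : 0 < l)
    (u : Fin N → ℂ) (hu : ∀ i, u i ≠ 0)
    (hM : (Matrix.diagonal (fun i => (d i : ℂ))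
            - (l : ℂ) • Matrix.vecMulVec u (star u)).PosSemidef)
    (heq : Matrix.diagonal (fun i => (d i : ℂ)) * C
            = (l : ℂ) • (Matrix.vecMulVec u (star u) * C)) :
    IsUnit (Matrix.diagonal (fun i => (d i : ℂ))) ∧ C.rank = 1 :=
  sdr_rank_one_general N C hC0 d l hl u hu hM heq
end

section
/- Let N, M be positive integers, let H be an N×M complex matrix, ĥ ∈ ℂ^N, and let β be a real number with 0 < β ≤ 1. Define Z(μ) = (I − H Hᴴ (β⁻² μ I + H Hᴴ)⁻¹) H and Υ(μ) = diag(ĥ)ᴴ Z(μ) Z(μ)ᴴ diag(ĥ). Then for all real μ₁, μ₂ with 0 < μ₁ ≤ μ₂, the matrix Υ(μ₂) − Υ(μ₁) is positive semidefinite; in particular, for every θ ∈ ℂ^N, the quadratic form q_{Υ(μ)}(θ) = θᵀ Υ(μ) θ̄ is monotone nondecreasing in μ. -/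
open Matrix
open scoped ComplexOrder

/-- `Z(μ) = (I − H Hᴴ (β⁻²μ I + H Hᴴ)⁻¹) H`. -/
noncomputable def Zmat {N M : ℕ} (H : Matrix (Fin N) (Fin M) ℂ) (β μ : ℝ) :
    Matrix (Fin N) (Fin M) ℂ :=
  ((1 : Matrix (Fin N) (Fin N) ℂ)
    - H * Hᴴ * (((((β : ℂ) ^ 2)⁻¹ * (μ : ℂ)) • 1 + H * Hᴴ)⁻¹)) * H

/-- `Υ(μ) = diag(ĥ)ᴴ Z(μ) Z(μ)ᴴ diag(ĥ)`. -/
noncomputable def Ups {N M : ℕ} (H : Matrix (Fin N) (Fin M) ℂ) (β μ : ℝ)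
    (hhat : Fin N → ℂ) : Matrix (Fin N) (Fin N) ℂ :=
  (Matrix.diagonal hhat)ᴴ * Zmat H β μ * (Zmat H β μ)ᴴ * Matrix.diagonal hhat

/-!
With `A = H Hᴴ ⪰ 0` and `r = μ / β²` one has `1 - A (r I + A)⁻¹ = r (r I + A)⁻¹`, so by the
functional calculus `Z(μ) Z(μ)ᴴ = residualGain r A`, where `residualGain r a = (r / (r + a))² a`.
For `a ≥ 0` this is nondecreasing in `r`, so by monotonicity of the functional calculus
`Z(μ) Z(μ)ᴴ` is nondecreasing in `μ` in the Loewner order, and congruence by `diag(ĥ)` preserves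
that order.
-/

open scoped MatrixOrder

noncomputable def residualGain (r a : ℝ) : ℝ := (r / (r + a)) ^ 2 * a

theorem residualGain_le_residualGain {r₁ r₂ a : ℝ} (hr₁ : 0 < r₁) (hr : r₁ ≤ r₂) (ha : 0 ≤ a) :
    residualGain r₁ a ≤ residualGain r₂ a := by
  have hr₂ : 0 < r₂ := hr₁.trans_le hr
  have : r₁ / (r₁ + a) ≤ r₂ / (r₂ + a) := by
    rw [div_le_div_iff₀ (by positivity) (by positivity)]
    nlinarith
  unfold residualGain
  gcongr ?_ ^ 2 * a

namespace Matrix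

theorem re_dotProduct_mulVec_star_le {n : Type*} [Fintype n] {A B : Matrix n n ℂ} (h : A ≤ B)
    (θ : n → ℂ) : (θ ⬝ᵥ (A *ᵥ star θ)).re ≤ (θ ⬝ᵥ (B *ᵥ star θ)).re := by
  have h₀ := (le_iff.mp h).dotProduct_mulVec_nonneg (star θ)
  rw [star_star, sub_mulVec, dotProduct_sub, sub_nonneg] at h₀
  exact (Complex.le_def.mp h₀).1

variable {m n 𝕜 : Type*} [Fintype m] [Fintype n] [DecidableEq n] [RCLike 𝕜]

theorem one_sub_mul_inv_smul_one_add_eq_cfc {A : Matrix n n 𝕜} (hA : 0 ≤ A) {r : ℝ}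
    (hr : 0 < r) : 1 - A * (r • 1 + A)⁻¹ = cfc (fun a => r / (r + a)) A := by
  have hne : ∀ a ∈ spectrum ℝ A, r + a ≠ 0 := fun a ha =>
    (add_pos_of_pos_of_nonneg hr (spectrum_nonneg_of_nonneg hA ha)).ne'
  have hcont (f : ℝ → ℝ) : ContinuousOn f (spectrum ℝ A) := A.finite_real_spectrum.continuousOn f
  have hS : r • 1 + A = cfc (fun a => r + a) A := by
    rw [cfc_const_add r (fun a => a) A, cfc_id' ℝ A, Algebra.algebraMap_eq_smul_one]
  have hinv : (r • 1 + A)⁻¹ = cfc (fun a => (r + a)⁻¹) A := by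
    refine inv_eq_left_inv ?_
    rw [hS, ← cfc_mul _ _ A (hcont _) (hcont _), ← cfc_one ℝ A]
    exact cfc_congr fun a ha => inv_mul_cancel₀ (hne a ha)
  symm
  calc cfc (fun a => r / (r + a)) A = cfc (fun a => 1 - a * (r + a)⁻¹) A :=
        cfc_congr fun a ha => by field_simp [hne a ha]; ring
    _ = 1 - A * (r • 1 + A)⁻¹ := by
        rw [cfc_sub (fun _ => 1) (fun a => a * (r + a)⁻¹) A (hcont _) (hcont _),
          cfc_const_one ℝ A, cfc_mul (fun a => a) _ A (hcont _) (hcont _), cfc_id' ℝ A, hinv]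

theorem one_sub_mul_inv_mul_self_mul_conjTranspose_eq_cfc (H : Matrix n m 𝕜) {r : ℝ}
    (hr : 0 < r) :
    (1 - H * Hᴴ * (r • 1 + H * Hᴴ)⁻¹) * H * ((1 - H * Hᴴ * (r • 1 + H * Hᴴ)⁻¹) * H)ᴴ
      = cfc (residualGain r) (H * Hᴴ) := by
  have hA : 0 ≤ H * Hᴴ := (posSemidef_self_mul_conjTranspose H).nonneg
  have hcont (f : ℝ → ℝ) : ContinuousOn f (spectrum ℝ (H * Hᴴ)) :=
    (H * Hᴴ).finite_real_spectrum.continuousOn f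
  set G := cfc (fun a => r / (r + a)) (H * Hᴴ)
  have hG : Gᴴ = G := (cfc_predicate _ (H * Hᴴ) : IsSelfAdjoint G).star_eq
  rw [one_sub_mul_inv_smul_one_add_eq_cfc hA hr, conjTranspose_mul, hG]
  symm
  calc cfc (residualGain r) (H * Hᴴ)
        = cfc (fun a => r / (r + a) * a * (r / (r + a))) (H * Hᴴ) :=
        cfc_congr fun a _ => by unfold residualGain; ring
    _ = G * H * (Hᴴ * G) := by
        rw [cfc_mul _ _ _ (hcont _) (hcont _), cfc_mul _ (fun a => a) _ (hcont _) (hcont _),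
          cfc_id' ℝ (H * Hᴴ)]
        simp only [G, Matrix.mul_assoc]

end Matrix

theorem Ups_eq_star_mul_cfc_mul {N M : ℕ} (H : Matrix (Fin N) (Fin M) ℂ) {β μ : ℝ} (hβ : β ≠ 0)
    (hμ : 0 < μ) (hhat : Fin N → ℂ) :
    Ups H β μ hhat =
      star (diagonal hhat) * cfc (residualGain (μ / β ^ 2)) (H * Hᴴ) * diagonal hhat := by
  have hr : (((β : ℂ) ^ 2)⁻¹ * (μ : ℂ)) • (1 : Matrix (Fin N) (Fin N) ℂ) = (μ / β ^ 2) • 1 := by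
    rw [← Complex.coe_smul]; push_cast; ring_nf
  rw [Ups, Matrix.mul_assoc _ (Zmat H β μ), Zmat, hr,
    one_sub_mul_inv_mul_self_mul_conjTranspose_eq_cfc H (by positivity)]
  rfl

theorem ups_monotone_general (N M : ℕ)
    (H : Matrix (Fin N) (Fin M) ℂ) (hhat : Fin N → ℂ) (β : ℝ)
    (hβ : 0 < β) :
    ∀ μ₁ μ₂ : ℝ, 0 < μ₁ → μ₁ ≤ μ₂ →
      (Ups H β μ₂ hhat - Ups H β μ₁ hhat).PosSemidef ∧
      ∀ θ : Fin N → ℂ,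
        (θ ⬝ᵥ (Ups H β μ₁ hhat *ᵥ star θ)).re
          ≤ (θ ⬝ᵥ (Ups H β μ₂ hhat *ᵥ star θ)).re := by
  intro μ₁ μ₂ hμ₁ hμ
  have hA : 0 ≤ H * Hᴴ := (posSemidef_self_mul_conjTranspose H).nonneg
  have hle : Ups H β μ₁ hhat ≤ Ups H β μ₂ hhat := by
    rw [Ups_eq_star_mul_cfc_mul H hβ.ne' hμ₁, Ups_eq_star_mul_cfc_mul H hβ.ne' (hμ₁.trans_le hμ)]
    refine star_left_conjugate_le_conjugate (cfc_mono (fun a ha => ?_)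
      (finite_real_spectrum.continuousOn _) (finite_real_spectrum.continuousOn _)) _
    exact residualGain_le_residualGain (by positivity) (by gcongr) (spectrum_nonneg_of_nonneg hA ha)
  exact ⟨le_iff.mp hle, re_dotProduct_mulVec_star_le hle⟩

/-- `Υ(μ₂) − Υ(μ₁) ⪰ 0` for `0 < μ₁ ≤ μ₂`; in particular the quadratic
form `θᵀ Υ(μ) θ̄` is monotone nondecreasing in `μ`. -/
theorem ups_monotone (N M : ℕ) (hN : 0 < N) (hM : 0 < M)
    (H : Matrix (Fin N) (Fin M) ℂ) (hhat : Fin N → ℂ) (β : ℝ)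
    (hβ : 0 < β) (hβ1 : β ≤ 1) :
    ∀ μ₁ μ₂ : ℝ, 0 < μ₁ → μ₁ ≤ μ₂ →
      (Ups H β μ₂ hhat - Ups H β μ₁ hhat).PosSemidef ∧
      ∀ θ : Fin N → ℂ,
        (θ ⬝ᵥ (Ups H β μ₁ hhat *ᵥ star θ)).re
          ≤ (θ ⬝ᵥ (Ups H β μ₂ hhat *ᵥ star θ)).re :=
  ups_monotone_general N M H hhat β hβ
end

section
/- Let N, M be positive integers, let H be an N×M complex matrix, ĥ ∈ ℂ^N, and β > 0. Define Γ(μ) = β² diag(ĥ)ᴴ H Hᴴ (μ I + β² H Hᴴ)⁻² H Hᴴ diag(ĥ). Then for all real μ₁, μ₂ with 0 < μ₁ ≤ μ₂, the matrix Γ(μ₁) − Γ(μ₂) is positive semidefinite; in particular, for every θ ∈ ℂ^N, the quadratic form q_{Γ(μ)}(θ) = θᵀ Γ(μ) θ̄ is monotone nonincreasing in μ. -/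
/-!
With `S(μ) = μ I + β² H Hᴴ`, positive definite for `μ > 0`, we have `Γ(μ) = β² Cᴴ S(μ)⁻² C`
for `C = H Hᴴ diag(ĥ)`. Since `S(μ₂) = S(μ₁) + (μ₂ - μ₁) I` commutes with `S(μ₁)`,
`S(μ₁)⁻² - S(μ₂)⁻² = (μ₂ - μ₁) Bᴴ (S(μ₁) + S(μ₂)) B` with `B = S(μ₂)⁻¹ S(μ₁)⁻¹`,
a congruence of a positive definite matrix, so `Γ(μ₁) - Γ(μ₂) ⪰ 0`.
-/

open Matrix
open scoped ComplexOrder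

/-- `Γ(μ) = β² diag(ĥ)ᴴ H Hᴴ (μ I + β² H Hᴴ)⁻² H Hᴴ diag(ĥ)`. -/
noncomputable def Gam {N M : ℕ} (H : Matrix (Fin N) (Fin M) ℂ) (β μ : ℝ)
    (hhat : Fin N → ℂ) : Matrix (Fin N) (Fin N) ℂ :=
  ((β : ℂ) ^ 2) •
    ((Matrix.diagonal hhat)ᴴ * (H * Hᴴ)
      * (((μ : ℂ) • 1 + ((β : ℂ) ^ 2) • (H * Hᴴ))⁻¹
          * ((μ : ℂ) • 1 + ((β : ℂ) ^ 2) • (H * Hᴴ))⁻¹)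
      * (H * Hᴴ) * Matrix.diagonal hhat)

theorem invOf_mul_invOf_sub_invOf_mul_invOf {R : Type*} [Ring R] {a b : R}
    [Invertible a] [Invertible b] (h : Commute a b) :
    ⅟a * ⅟a - ⅟b * ⅟b = ⅟a * ⅟b * (b * b - a * a) * (⅟b * ⅟a) := by
  have hb : Commute (⅟b) a := h.symm.invOf_left
  rw [mul_sub, sub_mul]
  congr 1
  · simp only [mul_assoc, invOf_mul_cancel_left, mul_invOf_cancel_left]
  · symm
    calc ⅟a * ⅟b * (a * a) * (⅟b * ⅟a) = ⅟a * (a * a) * ⅟b * ⅟b * ⅟a := by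
          rw [mul_assoc (⅟a), (hb.mul_right hb).eq]; simp only [mul_assoc]
      _ = a * (⅟b * ⅟b) * ⅟a := by simp only [mul_assoc, invOf_mul_cancel_left]
      _ = ⅟b * ⅟b := by rw [← (hb.mul_left hb).eq, mul_invOf_cancel_right]

namespace Matrix.PosSemidef

variable {𝕜 : Type*} [RCLike 𝕜] {n : Type*}

theorem posDef_smul_one_add [DecidableEq n] {A : Matrix n n 𝕜} (hA : A.PosSemidef) {μ : ℝ}
    (hμ : 0 < μ) : ((μ : 𝕜) • 1 + A).PosDef :=
  (PosDef.one.smul (RCLike.ofReal_pos.mpr hμ)).add_posSemidef hA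

variable [Fintype n]

theorem re_dotProduct_mulVec_star_le {P Q : Matrix n n 𝕜} (h : (P - Q).PosSemidef)
    (x : n → 𝕜) : RCLike.re (x ⬝ᵥ Q *ᵥ star x) ≤ RCLike.re (x ⬝ᵥ P *ᵥ star x) := by
  have hx := h.dotProduct_mulVec_nonneg (star x)
  rw [star_star, sub_mulVec, dotProduct_sub] at hx
  simpa using (RCLike.nonneg_iff.mp hx).1

theorem inv_mul_inv_sub_inv_mul_inv [DecidableEq n] {A : Matrix n n 𝕜} (hA : A.PosSemidef)
    {μ₁ μ₂ : ℝ} (hμ₁ : 0 < μ₁) (hμ : μ₁ ≤ μ₂) :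
    (((μ₁ : 𝕜) • 1 + A)⁻¹ * ((μ₁ : 𝕜) • 1 + A)⁻¹
      - ((μ₂ : 𝕜) • 1 + A)⁻¹ * ((μ₂ : 𝕜) • 1 + A)⁻¹).PosSemidef := by
  set S₁ := (μ₁ : 𝕜) • 1 + A
  set S₂ := (μ₂ : 𝕜) • 1 + A
  have hS₁ : S₁.PosDef := hA.posDef_smul_one_add hμ₁
  have hS₂ : S₂.PosDef := hA.posDef_smul_one_add (hμ₁.trans_le hμ)
  have hS : S₂ = S₁ + ((μ₂ - μ₁ : ℝ) : 𝕜) • 1 := by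
    simp only [S₁, S₂, RCLike.ofReal_sub, sub_smul]; abel
  have hcomm : Commute S₁ S₂ :=
    hS ▸ (Commute.refl S₁).add_right ((Commute.one_right S₁).smul_right _)
  have : Invertible S₁ := hS₁.isUnit.invertible
  have : Invertible S₂ := hS₂.isUnit.invertible
  have hsq : S₂ * S₂ - S₁ * S₁ = ((μ₂ - μ₁ : ℝ) : 𝕜) • (S₂ + S₁) := by
    rw [hcomm.symm.mul_self_sub_mul_self_eq, hS, add_sub_cancel_left, mul_smul_one]
  have hdiff : S₁⁻¹ * S₁⁻¹ - S₂⁻¹ * S₂⁻¹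
      = ((μ₂ - μ₁ : ℝ) : 𝕜) • ((S₂⁻¹ * S₁⁻¹)ᴴ * (S₂ + S₁) * (S₂⁻¹ * S₁⁻¹)) := by
    rw [conjTranspose_mul, hS₁.inv.isHermitian.eq, hS₂.inv.isHermitian.eq,
      ← invOf_eq_nonsing_inv, ← invOf_eq_nonsing_inv, invOf_mul_invOf_sub_invOf_mul_invOf hcomm,
      hsq, Matrix.mul_smul, Matrix.smul_mul]
  rw [hdiff]
  exact ((hS₂.posSemidef.add hS₁.posSemidef).conjTranspose_mul_mul_same _).smul
    (RCLike.ofReal_nonneg.mpr (sub_nonneg.mpr hμ))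

end Matrix.PosSemidef

theorem Gam_eq_smul_conjTranspose_mul_mul {N M : ℕ} (H : Matrix (Fin N) (Fin M) ℂ) (β μ : ℝ)
    (hhat : Fin N → ℂ) :
    Gam H β μ hhat = (β : ℂ) ^ 2 • ((H * Hᴴ * diagonal hhat)ᴴ
      * (((μ : ℂ) • 1 + (β : ℂ) ^ 2 • (H * Hᴴ))⁻¹ * ((μ : ℂ) • 1 + (β : ℂ) ^ 2 • (H * Hᴴ))⁻¹)
      * (H * Hᴴ * diagonal hhat)) := by
  simp only [Gam, conjTranspose_mul, conjTranspose_conjTranspose, Matrix.mul_assoc]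

theorem gam_antitone_general (N M : ℕ)
    (H : Matrix (Fin N) (Fin M) ℂ) (hhat : Fin N → ℂ) (β : ℝ) :
    ∀ μ₁ μ₂ : ℝ, 0 < μ₁ → μ₁ ≤ μ₂ →
      (Gam H β μ₁ hhat - Gam H β μ₂ hhat).PosSemidef ∧
      ∀ θ : Fin N → ℂ,
        (θ ⬝ᵥ (Gam H β μ₂ hhat *ᵥ star θ)).re
          ≤ (θ ⬝ᵥ (Gam H β μ₁ hhat *ᵥ star θ)).re := by
  intro μ₁ μ₂ hμ₁ hμ
  have hβsq : (0 : ℂ) ≤ (β : ℂ) ^ 2 := by exact_mod_cast sq_nonneg β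
  have hA : ((β : ℂ) ^ 2 • (H * Hᴴ)).PosSemidef :=
    (posSemidef_self_mul_conjTranspose H).smul hβsq
  have hΓ : (Gam H β μ₁ hhat - Gam H β μ₂ hhat).PosSemidef := by
    rw [Gam_eq_smul_conjTranspose_mul_mul, Gam_eq_smul_conjTranspose_mul_mul, ← smul_sub,
      ← Matrix.sub_mul, ← Matrix.mul_sub]
    exact ((hA.inv_mul_inv_sub_inv_mul_inv hμ₁ hμ).conjTranspose_mul_mul_same _).smul hβsq
  exact ⟨hΓ, hΓ.re_dotProduct_mulVec_star_le⟩

/-- `Γ(μ₁) − Γ(μ₂) ⪰ 0` for `0 < μ₁ ≤ μ₂`; in particular the quadratic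
form `θᵀ Γ(μ) θ̄` is monotone nonincreasing in `μ`. -/
theorem gam_antitone (N M : ℕ) (hN : 0 < N) (hM : 0 < M)
    (H : Matrix (Fin N) (Fin M) ℂ) (hhat : Fin N → ℂ) (β : ℝ) (hβ : 0 < β) :
    ∀ μ₁ μ₂ : ℝ, 0 < μ₁ → μ₁ ≤ μ₂ →
      (Gam H β μ₁ hhat - Gam H β μ₂ hhat).PosSemidef ∧
      ∀ θ : Fin N → ℂ,
        (θ ⬝ᵥ (Gam H β μ₂ hhat *ᵥ star θ)).re
          ≤ (θ ⬝ᵥ (Gam H β μ₁ hhat *ᵥ star θ)).re :=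
  gam_antitone_general N M H hhat β
end

section
/- Let N, M be positive integers, let H be an N×M complex matrix, and let β > 0 and μ > 0 be real numbers. Define Z(μ) = (I − H Hᴴ (β⁻² μ I + H Hᴴ)⁻¹) H. Then H Hᴴ − Z(μ) Z(μ)ᴴ is positive semidefinite, i.e., Z(μ) Z(μ)ᴴ ⪯ H Hᴴ in the Loewner order. Consequently, for any ĥ ∈ ℂ^N and any θ ∈ ℂ^N, θᵀ (diag(ĥ)ᴴ Z(μ) Z(μ)ᴴ diag(ĥ)) θ̄ ≤ θᵀ (diag(ĥ)ᴴ H Hᴴ diag(ĥ)) θ̄, so the objective quadratic form is bounded above uniformly in μ. -/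
open Matrix
open scoped ComplexOrder

lemma zzh_aux_pos {n : Type*} [Fintype n] [DecidableEq n]
    (A : Matrix n n ℂ) (hA : A.PosSemidef) (c : ℂ) (hc : 0 < c) :
    (A - (c * c) • ((c • 1 + A)⁻¹ * A * (c • 1 + A)⁻¹)).PosSemidef := by
  obtain ⟨S, hS_def⟩ : ∃ S, S = c • (1 : Matrix n n ℂ) + A := ⟨_, rfl⟩
  rw [← hS_def]
  have hS : S.PosDef := by
    rw [hS_def]
    refine Matrix.PosDef.add_posSemidef ?_ hA
    rw [smul_one_eq_diagonal]
    exact posDef_diagonal_iff.mpr fun _ => hc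
  have hdet : IsUnit S.det := (Matrix.isUnit_iff_isUnit_det S).mp hS.isUnit
  have h1 : S⁻¹ * S = 1 := Matrix.nonsing_inv_mul S hdet
  have h2 : S * S⁻¹ = 1 := Matrix.mul_nonsing_inv S hdet
  have hSinvH : S⁻¹ᴴ = S⁻¹ := hS.inv.isHermitian
  have hSAS : S * A * S = (c * c) • A + (2 * c) • (A * A) + A * A * A := by
    rw [hS_def]
    simp only [add_mul, mul_add, Matrix.smul_mul, Matrix.mul_smul, one_mul, mul_one, smul_smul]
    module
  have hAexp : A = (c * c) • (S⁻¹ * A * S⁻¹) + (2 * c) • (S⁻¹ * A * (A * S⁻¹))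
      + S⁻¹ * A * A * (A * S⁻¹) := by
    calc A = (S⁻¹ * S) * A * (S * S⁻¹) := by rw [h1, h2, one_mul, mul_one]
      _ = S⁻¹ * (S * A * S) * S⁻¹ := by simp only [Matrix.mul_assoc]
      _ = _ := by
        rw [hSAS]
        simp only [mul_add, add_mul, Matrix.smul_mul, Matrix.mul_smul, Matrix.mul_assoc]
  have key : A - (c * c) • (S⁻¹ * A * S⁻¹)
      = (S⁻¹ * A) * ((2 * c) • 1 + A) * (A * S⁻¹) := by
    calc A - (c * c) • (S⁻¹ * A * S⁻¹)
        = (2 * c) • (S⁻¹ * A * (A * S⁻¹)) + S⁻¹ * A * A * (A * S⁻¹) := by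
          nth_rewrite 1 [hAexp]; abel
      _ = (S⁻¹ * A) * ((2 * c) • 1 + A) * (A * S⁻¹) := by
          simp only [mul_add, add_mul, Matrix.smul_mul, Matrix.mul_smul, one_mul, mul_one,
            Matrix.mul_assoc]
  rw [key]
  have hmid : ((2 * c) • (1 : Matrix n n ℂ) + A).PosSemidef := by
    refine Matrix.PosSemidef.add ?_ hA
    rw [smul_one_eq_diagonal]
    exact posSemidef_diagonal_iff.mpr fun _ => by positivity
  have hconj := hmid.mul_mul_conjTranspose_same (S⁻¹ * A)
  have hSAH : (S⁻¹ * A)ᴴ = A * S⁻¹ := by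
    rw [conjTranspose_mul, hSinvH, hA.isHermitian.eq]
  rwa [hSAH] at hconj

lemma zzh_aux_Z {n m : Type*} [Fintype n] [DecidableEq n] [Fintype m]
    (H : Matrix n m ℂ) (c : ℂ) (hc : 0 < c) (hcs : star c = c) :
    ((1 - H * Hᴴ * ((c • 1 + H * Hᴴ)⁻¹)) * H)
        * ((1 - H * Hᴴ * ((c • 1 + H * Hᴴ)⁻¹)) * H)ᴴ
      = (c * c) • ((c • 1 + H * Hᴴ)⁻¹ * (H * Hᴴ) * (c • 1 + H * Hᴴ)⁻¹) := by
  obtain ⟨A, hA_def⟩ : ∃ A, A = H * Hᴴ := ⟨_, rfl⟩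
  have hA : A.PosSemidef := hA_def ▸ posSemidef_self_mul_conjTranspose H
  rw [← hA_def]
  obtain ⟨S, hS_def⟩ : ∃ S, S = c • (1 : Matrix n n ℂ) + A := ⟨_, rfl⟩
  rw [← hS_def]
  have hS : S.PosDef := by
    rw [hS_def]
    refine Matrix.PosDef.add_posSemidef ?_ hA
    rw [smul_one_eq_diagonal]
    exact posDef_diagonal_iff.mpr fun _ => hc
  have hdet : IsUnit S.det := (Matrix.isUnit_iff_isUnit_det S).mp hS.isUnit
  have h2 : S * S⁻¹ = 1 := Matrix.mul_nonsing_inv S hdet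
  have hSinvH : S⁻¹ᴴ = S⁻¹ := hS.inv.isHermitian
  have h1minus : (1 : Matrix n n ℂ) - A * S⁻¹ = c • S⁻¹ := by
    have h2' := h2
    nth_rewrite 1 [hS_def] at h2'
    rw [add_mul, Matrix.smul_mul, one_mul] at h2'
    rw [← h2']; abel
  rw [h1minus, conjTranspose_mul, conjTranspose_smul, hSinvH, hcs]
  simp only [Matrix.smul_mul, Matrix.mul_smul, smul_smul, Matrix.mul_assoc, hA_def]

/-- `Z(μ) Z(μ)ᴴ ⪯ H Hᴴ` in the Loewner order, and the resulting uniform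
upper bound on the objective quadratic form. -/
theorem ZZH_loewner_bound (N M : ℕ) (hN : 0 < N) (hM : 0 < M)
    (H : Matrix (Fin N) (Fin M) ℂ) (β μ : ℝ) (hβ : 0 < β) (hμ : 0 < μ) :
    (H * Hᴴ - Zmat H β μ * (Zmat H β μ)ᴴ).PosSemidef ∧
    ∀ (hhat θ : Fin N → ℂ),
      (θ ⬝ᵥ (((Matrix.diagonal hhat)ᴴ * Zmat H β μ * (Zmat H β μ)ᴴ
          * Matrix.diagonal hhat) *ᵥ star θ)).re
        ≤ (θ ⬝ᵥ (((Matrix.diagonal hhat)ᴴ * (H * Hᴴ)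
          * Matrix.diagonal hhat) *ᵥ star θ)).re := by
  have hcre : (((β : ℂ) ^ 2)⁻¹ * (μ : ℂ)) = (((β ^ 2)⁻¹ * μ : ℝ) : ℂ) := by
    push_cast; ring
  have hcpos : 0 < (((β : ℂ) ^ 2)⁻¹ * (μ : ℂ)) := by
    rw [hcre, Complex.zero_lt_real]; positivity
  have hcstar : star (((β : ℂ) ^ 2)⁻¹ * (μ : ℂ)) = (((β : ℂ) ^ 2)⁻¹ * (μ : ℂ)) := by
    rw [hcre]; exact Complex.conj_ofReal _
  have hZZ : Zmat H β μ * (Zmat H β μ)ᴴ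
      = ((((β : ℂ) ^ 2)⁻¹ * (μ : ℂ)) * (((β : ℂ) ^ 2)⁻¹ * (μ : ℂ)))
          • (((((β : ℂ) ^ 2)⁻¹ * (μ : ℂ)) • 1 + H * Hᴴ)⁻¹ * (H * Hᴴ)
            * ((((β : ℂ) ^ 2)⁻¹ * (μ : ℂ)) • 1 + H * Hᴴ)⁻¹) := by
    rw [Zmat]; exact zzh_aux_Z H _ hcpos hcstar
  have main : (H * Hᴴ - Zmat H β μ * (Zmat H β μ)ᴴ).PosSemidef := by
    rw [hZZ]
    exact zzh_aux_pos (H * Hᴴ) (posSemidef_self_mul_conjTranspose H) _ hcpos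
  refine ⟨main, fun hhat θ => ?_⟩
  have hD := main.conjTranspose_mul_mul_same (Matrix.diagonal hhat)
  have hre := hD.re_dotProduct_nonneg (star θ)
  rw [star_star] at hre
  have hexp : (Matrix.diagonal hhat)ᴴ * (H * Hᴴ - Zmat H β μ * (Zmat H β μ)ᴴ)
      * Matrix.diagonal hhat
      = (Matrix.diagonal hhat)ᴴ * (H * Hᴴ) * Matrix.diagonal hhat
        - (Matrix.diagonal hhat)ᴴ * Zmat H β μ * (Zmat H β μ)ᴴ * Matrix.diagonal hhat := by
    simp only [mul_sub, sub_mul, Matrix.mul_assoc]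
  rw [hexp, sub_mulVec, dotProduct_sub, map_sub, sub_nonneg] at hre
  exact hre
end
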